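/- Let S be a finite set of n points in the plane with n ≥ 3. For p ∈ S write R_p := R(S \ {p}), and let r₁ := min over pairs of distinct p, q ∈ S of max(R_p, R_q) (i.e., r₁ is the second-smallest element, counted with multiplicity, of the family (R_p)_{p ∈ S}). Then for every family of trajectories (γ_p)_{p ∈ S}, where each γ_p : ℝ → ℝ² satisfies LipschitzWith 1 γ_p and γ_p(0) = p, there exists a subset N ⊆ S with |N| = n − 1 such that for every T ≥ 0 and every point P with γ_p(T) = P for all p ∈ N, one has T · r₁ ≥ R(S) · R(N). (Equivalently: every algorithm solving the gathering problem for n robots at most one of which is byzantine has competitive ratio at least R(S)/r₁.) -/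
import Mathlib


open scoped Classical

/-- The minimum enclosing radius of a finite set of points in the plane. -/
noncomputable def minEncRadius (S : Finset (EuclideanSpace ℝ (Fin 2))) : ℝ :=
  sInf { r : ℝ | ∃ c, ∀ p ∈ S, dist p c ≤ r }

lemma mer_set_nonempty (S : Finset (EuclideanSpace ℝ (Fin 2))) :
    { r : ℝ | ∃ c, ∀ p ∈ S, dist p c ≤ r }.Nonempty := by
  refine ⟨∑ p ∈ S, dist p (0 : EuclideanSpace ℝ (Fin 2)), (0 : EuclideanSpace ℝ (Fin 2)), fun p hp => ?_⟩
  exact Finset.single_le_sum (f := fun p => dist p (0 : EuclideanSpace ℝ (Fin 2))) (fun q _ => dist_nonneg) hp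

lemma mer_bddBelow (S : Finset (EuclideanSpace ℝ (Fin 2))) (hS : S.Nonempty) :
    BddBelow { r : ℝ | ∃ c, ∀ p ∈ S, dist p c ≤ r } := by
  refine ⟨0, fun r hr => ?_⟩
  obtain ⟨c, hc⟩ := hr
  obtain ⟨p, hp⟩ := hS
  exact le_trans dist_nonneg (hc p hp)

lemma mer_nonneg (S : Finset (EuclideanSpace ℝ (Fin 2))) (hS : S.Nonempty) :
    0 ≤ minEncRadius S := by
  refine le_csInf (mer_set_nonempty S) (fun r hr => ?_)
  obtain ⟨c, hc⟩ := hr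
  obtain ⟨p, hp⟩ := hS
  exact le_trans dist_nonneg (hc p hp)

lemma mer_le (S : Finset (EuclideanSpace ℝ (Fin 2))) (hS : S.Nonempty)
    (c : EuclideanSpace ℝ (Fin 2)) (r : ℝ) (h : ∀ p ∈ S, dist p c ≤ r) :
    minEncRadius S ≤ r :=
  csInf_le (mer_bddBelow S hS) ⟨c, h⟩

lemma mer_pos (S : Finset (EuclideanSpace ℝ (Fin 2))) {a b : EuclideanSpace ℝ (Fin 2)}
    (ha : a ∈ S) (hb : b ∈ S) (hab : a ≠ b) : 0 < minEncRadius S := by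
  have h2 : dist a b / 2 ≤ minEncRadius S := by
    refine le_csInf (mer_set_nonempty S) (fun r hr => ?_)
    obtain ⟨c, hc⟩ := hr
    have := dist_triangle a c b
    have h1 := hc a ha
    have h2 := hc b hb
    rw [dist_comm c b] at this
    linarith
  have : 0 < dist a b := dist_pos.mpr hab
  linarith

theorem one_byzantine_competitive_lower_bound
    (n : ℕ) (hn : 3 ≤ n)
    (S : Finset (EuclideanSpace ℝ (Fin 2))) (hcard : S.card = n)
    (r₁ : ℝ)
    (hr₁ : r₁ = sInf { x : ℝ | ∃ p ∈ S, ∃ q ∈ S, p ≠ q ∧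
        x = max (minEncRadius (S.erase p)) (minEncRadius (S.erase q)) })
    (γ : EuclideanSpace ℝ (Fin 2) → ℝ → EuclideanSpace ℝ (Fin 2))
    (hγ : ∀ p ∈ S, LipschitzWith 1 (γ p) ∧ γ p 0 = p) :
    ∃ N ⊆ S, N.card = n - 1 ∧
      ∀ T : ℝ, 0 ≤ T → ∀ P : EuclideanSpace ℝ (Fin 2),
        (∀ p ∈ N, γ p T = P) → T * r₁ ≥ minEncRadius S * minEncRadius N := by
  by_contra hcon
  push_neg at hcon
  -- two distinct points of S
  obtain ⟨a₀, ha₀, b₀, hb₀, hab₀⟩ := Finset.one_lt_card.mp (by omega : 1 < S.card)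
  have hSpos : 0 < minEncRadius S := mer_pos S ha₀ hb₀ hab₀
  -- for every p ∈ S a violating gathering of S.erase p
  have h2 : ∀ p : EuclideanSpace ℝ (Fin 2), ∃ T : ℝ, 0 ≤ T ∧ ∃ P,
      p ∈ S → ((∀ q ∈ S.erase p, γ q T = P) ∧
        T * r₁ < minEncRadius S * minEncRadius (S.erase p)) := by
    intro p
    by_cases hp : p ∈ S
    · obtain ⟨T, hT0, P, hP, hlt⟩ := hcon (S.erase p) (Finset.erase_subset _ _)
        (by rw [Finset.card_erase_of_mem hp, hcard])
      exact ⟨T, hT0, P, fun _ => ⟨hP, hlt⟩⟩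
    · exact ⟨0, le_rfl, 0, fun hps => absurd hps hp⟩
  choose T hT0 P hTP using h2
  -- erase sets are nonempty
  have herase_ne : ∀ p, (S.erase p).Nonempty := by
    intro p
    refine Finset.card_pos.mp ?_
    rcases Finset.decidableMem p S with _ | _
    all_goals {
      first
      | (rw [Finset.card_erase_of_mem ‹p ∈ S›, hcard]; omega)
      | (rw [Finset.erase_eq_of_notMem ‹p ∉ S›, hcard]; omega) }
  -- each robot is within T of the gathering point at time T
  have hdist : ∀ s ∈ S, ∀ t₁ t₂ : ℝ, dist (γ s t₁) (γ s t₂) ≤ |t₁ - t₂| := by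
    intro s hs t₁ t₂
    have := ((hγ s hs).1).dist_le_mul t₁ t₂
    simpa [Real.dist_eq] using this
  -- key: for distinct p q in S with T q ≤ T p, R(S) ≤ T p
  have key : ∀ p ∈ S, ∀ q ∈ S, p ≠ q → T q ≤ T p → minEncRadius S ≤ T p := by
    intro p hp q hq hpq hTle
    obtain ⟨hPp, _⟩ := hTP p hp
    obtain ⟨hPq, _⟩ := hTP q hq
    -- a third robot
    have hx : ((S.erase p).erase q).Nonempty := by
      refine Finset.card_pos.mp ?_
      rw [Finset.card_erase_of_mem (Finset.mem_erase.mpr ⟨Ne.symm hpq, hq⟩),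
        Finset.card_erase_of_mem hp, hcard]
      omega
    obtain ⟨x, hxm⟩ := hx
    have hxq : x ≠ q := (Finset.mem_erase.mp hxm).1
    have hxpS : x ∈ S.erase p := (Finset.mem_erase.mp hxm).2
    have hxp : x ≠ p := (Finset.mem_erase.mp hxpS).1
    have hxS : x ∈ S := (Finset.mem_erase.mp hxpS).2
    have hxqS : x ∈ S.erase q := Finset.mem_erase.mpr ⟨hxq, hxS⟩
    -- dist between the two gathering points
    have hPP : dist (P q) (P p) ≤ T p - T q := by
      have h1 : γ x (T q) = P q := hPq x hxqS
      have h2 : γ x (T p) = P p := hPp x hxpS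
      have := hdist x hxS (T q) (T p)
      rw [h1, h2] at this
      calc dist (P q) (P p) ≤ |T q - T p| := this
        _ = T p - T q := by rw [abs_sub_comm, abs_of_nonneg (by linarith)]
    refine mer_le S ⟨a₀, ha₀⟩ (P p) (T p) (fun s hs => ?_)
    by_cases hsp : s = p
    · -- p is at P q at time T q, and P q is close to P p
      have hpq' : s ∈ S.erase q := Finset.mem_erase.mpr ⟨hsp ▸ hpq, hs⟩
      have h1 : γ s (T q) = P q := hPq s hpq'
      have h2 : dist s (P q) ≤ T q := by
        have := hdist s hs 0 (T q)
        rw [(hγ s hs).2, h1] at this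
        calc dist s (P q) ≤ |0 - T q| := this
          _ = T q := by rw [abs_sub_comm, sub_zero, abs_of_nonneg (hT0 q)]
      calc dist s (P p) ≤ dist s (P q) + dist (P q) (P p) := dist_triangle _ _ _
        _ ≤ T q + (T p - T q) := by linarith
        _ = T p := by ring
    · have hs' : s ∈ S.erase p := Finset.mem_erase.mpr ⟨hsp, hs⟩
      have h1 : γ s (T p) = P p := hPp s hs'
      have := hdist s hs 0 (T p)
      rw [(hγ s hs).2, h1] at this
      calc dist s (P p) ≤ |0 - T p| := this
        _ = T p := by rw [abs_sub_comm, sub_zero, abs_of_nonneg (hT0 p)]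
  -- minimizer of T over S
  obtain ⟨m, hmS, hmin⟩ := S.exists_min_image T ⟨a₀, ha₀⟩
  -- for all p ≠ m in S : r₁ < R(S.erase p)
  have claim : ∀ p ∈ S, p ≠ m → r₁ < minEncRadius (S.erase p) := by
    intro p hp hpm
    have hRS : minEncRadius S ≤ T p := key p hp m hmS hpm (hmin p hp)
    have hTp : 0 < T p := lt_of_lt_of_le hSpos hRS
    have hlt := (hTP p hp).2
    have hRp : 0 ≤ minEncRadius (S.erase p) := mer_nonneg _ (herase_ne p)
    have : T p * r₁ < T p * minEncRadius (S.erase p) := by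
      calc T p * r₁ < minEncRadius S * minEncRadius (S.erase p) := hlt
        _ ≤ T p * minEncRadius (S.erase p) := mul_le_mul_of_nonneg_right hRS hRp
    exact lt_of_mul_lt_mul_left this (le_of_lt hTp)
  -- r₁ is attained: the set is finite and nonempty
  set A := { x : ℝ | ∃ p ∈ S, ∃ q ∈ S, p ≠ q ∧
      x = max (minEncRadius (S.erase p)) (minEncRadius (S.erase q)) } with hA
  have hAne : A.Nonempty := ⟨_, a₀, ha₀, b₀, hb₀, hab₀, rfl⟩
  have hAfin : A.Finite := by
    apply Set.Finite.subset (Set.Finite.image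
      (fun pq : EuclideanSpace ℝ (Fin 2) × EuclideanSpace ℝ (Fin 2) =>
        max (minEncRadius (S.erase pq.1)) (minEncRadius (S.erase pq.2)))
      (((S ×ˢ S : Finset _) : Set (EuclideanSpace ℝ (Fin 2) × EuclideanSpace ℝ (Fin 2))).toFinite))
    rintro x ⟨p, hp, q, hq, hpq, rfl⟩
    exact ⟨(p, q), by simp [hp, hq], rfl⟩
  have hmem : r₁ ∈ A := hr₁ ▸ hAne.csInf_mem hAfin
  obtain ⟨p, hp, q, hq, hpq, hmax⟩ := hmem
  have : r₁ < max (minEncRadius (S.erase p)) (minEncRadius (S.erase q)) := by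
    by_cases hpm : p = m
    · have hqm : q ≠ m := fun h => hpq (hpm.trans h.symm)
      exact lt_max_of_lt_right (claim q hq hqm)
    · exact lt_max_of_lt_left (claim p hp hpm)
  rw [← hmax] at this
  exact lt_irrefl _ this
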